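/- Let α: ℝ → ℝ be locally Lipschitz with α(0) = 0 and α strictly increasing, and let h: [0,T] → ℝ be differentiable with h(0) ≥ 0 and ḣ(t) ≥ −α(h(t)) for all t ∈ [0,T]. Then h(t) ≥ 0 for all t ∈ [0,T]. -/
import Mathlib


open Set

theorem stmt4 (α : ℝ → ℝ) (hα : LocallyLipschitz α) (hα0 : α 0 = 0)
    (hαmono : StrictMono α) (T : ℝ) (h h' : ℝ → ℝ)
    (hdiff : ∀ t ∈ Icc (0 : ℝ) T, HasDerivAt h (h' t) t)
    (h0 : h 0 ≥ 0)
    (hineq : ∀ t ∈ Icc (0 : ℝ) T, h' t ≥ -α (h t)) :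
    ∀ t ∈ Icc (0 : ℝ) T, h t ≥ 0 := by
  intro t0 ht0
  by_contra hneg
  push_neg at hneg
  obtain ⟨ht00, ht0T⟩ := ht0
  have hcont : ContinuousOn h (Icc 0 T) := fun x hx =>
    (hdiff x hx).continuousAt.continuousWithinAt
  set S : Set ℝ := Icc 0 t0 ∩ h ⁻¹' Ici 0 with hS
  have hsub : Icc (0:ℝ) t0 ⊆ Icc 0 T := Icc_subset_Icc le_rfl ht0T
  have hSclosed : IsClosed S :=
    (hcont.mono hsub).preimage_isClosed_of_isClosed isClosed_Icc isClosed_Ici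
  have hS0 : (0:ℝ) ∈ S := ⟨⟨le_rfl, ht00⟩, h0⟩
  have hSne : S.Nonempty := ⟨0, hS0⟩
  have hSbdd : BddAbove S := ⟨t0, fun x hx => hx.1.2⟩
  set s := sSup S with hs
  have hsmem : s ∈ S := hSclosed.csSup_mem hSne hSbdd
  have hs0 : 0 ≤ s := hsmem.1.1
  have hst0 : s ≤ t0 := hsmem.1.2
  have hhs : 0 ≤ h s := hsmem.2
  have hslt : s < t0 := hst0.lt_of_ne fun he => not_le.mpr hneg (he ▸ hhs)
  -- on (s, t0), h < 0
  have hhlt : ∀ x ∈ Ioo s t0, h x < 0 := by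
    intro x hx
    by_contra hge
    push_neg at hge
    have : x ∈ S := ⟨⟨hs0.trans hx.1.le, hx.2.le⟩, hge⟩
    exact absurd (le_csSup hSbdd this) (not_le.mpr hx.1)
  -- h strictly mono on [s, t0]
  have hmono : StrictMonoOn h (Icc s t0) := by
    apply strictMonoOn_of_deriv_pos (convex_Icc s t0)
    · exact hcont.mono (Icc_subset_Icc hs0 ht0T)
    · intro x hx
      rw [interior_Icc] at hx
      have hxT : x ∈ Icc (0:ℝ) T := ⟨hs0.trans hx.1.le, hx.2.le.trans ht0T⟩
      rw [(hdiff x hxT).deriv]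
      have : α (h x) < α 0 := hαmono (hhlt x hx)
      rw [hα0] at this
      have := hineq x hxT
      linarith
  have := hmono ⟨le_rfl, hst0⟩ ⟨hst0, le_rfl⟩ hslt
  linarith
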